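/- The kernel of the letter-deleting coproduct Δ : Q⟨a,b⟩ → Q⟨a,b⟩ ⊗ Q⟨a,b⟩ equals the subalgebra Q[a−b] of polynomials in the single element a−b. -/

import Mathlib

open scoped TensorProduct

noncomputable section

/-- `Q⟨a,b⟩` as the monoid algebra over `ℚ` of the free monoid on two letters. -/
abbrev QA := MonoidAlgebra ℚ (FreeMonoid (Fin 2))

def ofW (w : FreeMonoid (Fin 2)) : QA := MonoidAlgebra.of ℚ (FreeMonoid (Fin 2)) w

/-- The letter-deleting coproduct on a word: delete one letter and split there. -/
def deltaWord (w : FreeMonoid (Fin 2)) : QA ⊗[ℚ] QA :=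
  ∑ i ∈ Finset.range w.length,
    ofW (FreeMonoid.ofList (w.toList.take i)) ⊗ₜ[ℚ]
      ofW (FreeMonoid.ofList (w.toList.drop (i + 1)))

/-- The coproduct `Δ` on `Q⟨a,b⟩`, extended linearly from words. -/
def Delta : QA →ₗ[ℚ] QA ⊗[ℚ] QA :=
  Finsupp.lsum ℚ (fun w => LinearMap.toSpanSingleton ℚ _ (deltaWord w)) ∘ₗ
    (MonoidAlgebra.coeffLinearEquiv ℚ).toLinearMap

/-- The generator `a`. -/
def av : QA := ofW (FreeMonoid.of 0)
/-- The generator `b`. -/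
def bv : QA := ofW (FreeMonoid.of 1)


/-!
For a letter `x`, `Δ(x f) = (x ⊗ 1) Δf + 1 ⊗ f`. The terms `1 ⊗ f` cancel for `x = a - b`, so
`Δ((a - b) f) = ((a - b) ⊗ 1) Δf` and all powers of `a - b` lie in the kernel.

Conversely, the coefficient of `p ⊗ s` in `Δf` is `f(p a s) + f(p b s)`. So if `Δf = 0`, turning a
letter `b` into `a` flips the sign of a coefficient: `f(w) = (-1)^{#b(w)} f(a^{|w|})`. These are
exactly the coefficients of `∑ₙ f(aⁿ) (a - b)ⁿ`.
-/

theorem List.take_eq_and_drop_succ_eq_iff {α : Type*} {w p s : List α} {i : ℕ} :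
    (w.take i = p ∧ w.drop (i + 1) = s ∧ i < w.length) ↔
      i = p.length ∧ ∃ c, w = p ++ c :: s := by
  constructor
  · rintro ⟨rfl, rfl, hi⟩
    refine ⟨(List.length_take_of_le hi.le).symm, w[i], ?_⟩
    rw [← List.drop_eq_getElem_cons hi, List.take_append_drop]
  · rintro ⟨rfl, c, rfl⟩
    exact ⟨List.take_left, by simp, by simp⟩

open MonoidAlgebra

theorem FreeMonoid.coeff_single_of_mul_ofList_cons {α R : Type*} [Semiring R] [DecidableEq α]
    (c d : α) (r : R) (g : R[FreeMonoid α]) (w : List α) :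
    (single (of c) r * g).coeff (ofList (d :: w)) = if c = d then r * g.coeff (ofList w) else 0 := by
  split_ifs with h
  · subst h
    exact coeff_single_mul_eq_mul_coeff _ fun m _ => by
      rw [← FreeMonoid.toList.injective.eq_iff]
      simp only [toList_mul, toList_of, toList_ofList, List.singleton_append, List.cons.injEq,
        true_and]
      constructor <;> rintro rfl <;> rfl
  · exact coeff_single_mul_of_forall_mul_ne _ _ fun m hm => h (by simpa using congrArg toList hm :).1

theorem apply_eq_neg_one_pow_count_mul_apply_replicate {R : Type*} [Ring R] (g : List (Fin 2) → R)
    (hg : ∀ p s, g (p ++ 0 :: s) + g (p ++ 1 :: s) = 0) (w : List (Fin 2)) :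
    g w = (-1) ^ w.count 1 * g (List.replicate w.length 0) := by
  suffices h : ∀ p, g (p ++ w) = (-1) ^ w.count 1 * g (p ++ List.replicate w.length 0) from
    h []
  induction w with
  | nil => simp
  | cons c w ih =>
    intro p
    have h := ih (p ++ [0])
    simp only [List.append_assoc, List.singleton_append] at h
    fin_cases c
    · simpa [List.replicate_succ] using h
    · simp [List.replicate_succ, ← h, pow_succ, eq_neg_of_add_eq_zero_right (hg p w)]

theorem Delta_single (w : FreeMonoid (Fin 2)) (r : ℚ) : Delta (single w r) = r • deltaWord w := by
  simp [Delta]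

theorem deltaWord_of_mul (c : Fin 2) (w : FreeMonoid (Fin 2)) :
    deltaWord (FreeMonoid.of c * w) =
      (ofW (FreeMonoid.of c) ⊗ₜ[ℚ] 1) * deltaWord w + 1 ⊗ₜ[ℚ] ofW w := by
  rw [deltaWord, FreeMonoid.length_mul, FreeMonoid.length_of, add_comm, Finset.sum_range_succ',
    deltaWord, Finset.mul_sum]
  congr 1
  refine Finset.sum_congr rfl fun i _ => ?_
  rw [Algebra.TensorProduct.tmul_mul_tmul, one_mul]
  simp only [ofW, ← map_mul]
  rfl

theorem Delta_ofW_of_mul (c : Fin 2) (f : QA) :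
    Delta (ofW (FreeMonoid.of c) * f) = (ofW (FreeMonoid.of c) ⊗ₜ[ℚ] 1) * Delta f + 1 ⊗ₜ[ℚ] f := by
  induction f using MonoidAlgebra.induction_linear with
  | zero => simp
  | add f g hf hg => simp only [mul_add, map_add, hf, hg, TensorProduct.tmul_add]; abel
  | single w r =>
    rw [ofW, of_apply, single_mul_single, one_mul, Delta_single, Delta_single, deltaWord_of_mul,
      smul_add, mul_smul_comm, ← TensorProduct.tmul_smul]
    simp only [ofW, of_apply, smul_single, smul_eq_mul, mul_one]

theorem Delta_av_sub_bv_mul (f : QA) : Delta ((av - bv) * f) = ((av - bv) ⊗ₜ[ℚ] 1) * Delta f := by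
  rw [sub_mul, map_sub, av, bv, Delta_ofW_of_mul, Delta_ofW_of_mul, TensorProduct.sub_tmul, sub_mul]
  abel

theorem Delta_av_sub_bv_pow (n : ℕ) : Delta ((av - bv) ^ n) = 0 := by
  induction n with
  | zero => simp [one_def, Delta_single, deltaWord]
  | succ n ih => rw [pow_succ', Delta_av_sub_bv_mul, ih, mul_zero]

def tensorCoeff (p s : FreeMonoid (Fin 2)) : QA ⊗[ℚ] QA →ₗ[ℚ] ℚ :=
  TensorProduct.lift <| (LinearMap.mul ℚ ℚ).compl₁₂
    (Finsupp.lapply p ∘ₗ (coeffLinearEquiv ℚ).toLinearMap)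
    (Finsupp.lapply s ∘ₗ (coeffLinearEquiv ℚ).toLinearMap)

theorem tensorCoeff_tmul (p s : FreeMonoid (Fin 2)) (x y : QA) :
    tensorCoeff p s (x ⊗ₜ y) = x.coeff p * y.coeff s :=
  rfl

theorem tensorCoeff_deltaWord (p s w : List (Fin 2)) :
    tensorCoeff (.ofList p) (.ofList s) (deltaWord (.ofList w)) =
      ∑ c, if w = p ++ c :: s then 1 else 0 := by
  classical
  have summand (i : ℕ) : tensorCoeff (.ofList p) (.ofList s)
      (ofW (.ofList (w.take i)) ⊗ₜ ofW (.ofList (w.drop (i + 1)))) =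
        if w.take i = p ∧ w.drop (i + 1) = s then 1 else 0 := by
    simp [tensorCoeff_tmul, ofW, Finsupp.single_apply, and_comm (a := w.take i = p), ite_and]
  simp only [deltaWord, map_sum, FreeMonoid.toList_ofList, FreeMonoid.length, summand]
  by_cases hw : ∃ c, w = p ++ c :: s
  · obtain ⟨c, rfl⟩ := hw
    rw [Finset.sum_eq_single_of_mem p.length (by simp), Finset.sum_eq_single_of_mem c (by simp)]
    · simp
    · intro d _ hd; simp [hd.symm]
    · intro i hi hip
      rw [if_neg fun h => hip (List.take_eq_and_drop_succ_eq_iff.mp ⟨h.1, h.2, by simpa using hi⟩).1]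
  · push Not at hw
    rw [Finset.sum_eq_zero, Finset.sum_eq_zero]
    · intro c _; simp [hw c]
    · intro i hi
      rw [if_neg fun h => (List.take_eq_and_drop_succ_eq_iff.mp ⟨h.1, h.2, by simpa using hi⟩).2.elim hw]

theorem tensorCoeff_Delta (f : QA) (p s : List (Fin 2)) :
    tensorCoeff (.ofList p) (.ofList s) (Delta f) = ∑ c, f.coeff (.ofList (p ++ c :: s)) := by
  classical
  induction f using MonoidAlgebra.induction_linear with
  | zero => simp
  | add f g hf hg => simp only [map_add, hf, hg, coeff_add, Finsupp.add_apply, Finset.sum_add_distrib]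
  | single w r =>
    obtain ⟨w, rfl⟩ := FreeMonoid.ofList.surjective w
    rw [Delta_single, map_smul, tensorCoeff_deltaWord, Finset.smul_sum]
    refine Finset.sum_congr rfl fun c _ => ?_
    rw [coeff_single, Finsupp.single_apply, FreeMonoid.ofList.apply_eq_iff_eq]
    split_ifs <;> simp_all

theorem coeff_eq_neg_one_pow_count_mul_of_Delta_eq_zero {f : QA} (hf : Delta f = 0)
    (w : List (Fin 2)) :
    f.coeff (.ofList w) = (-1) ^ w.count 1 * f.coeff (.ofList (.replicate w.length 0)) :=
  apply_eq_neg_one_pow_count_mul_apply_replicate (fun w => f.coeff (.ofList w))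
    (fun p s => by simpa [hf] using (tensorCoeff_Delta f p s).symm) w

theorem coeff_av_sub_bv_pow (n : ℕ) (w : List (Fin 2)) :
    ((av - bv) ^ n).coeff (.ofList w) = if w.length = n then (-1) ^ w.count 1 else 0 := by
  induction n generalizing w with
  | zero => cases w <;> simp [one_def]
  | succ n ih =>
    rw [pow_succ', sub_mul, coeff_sub, Finsupp.sub_apply]
    cases w with
    | nil => simp [av, bv, ofW]
    | cons d w =>
      generalize (av - bv) ^ n = g at ih
      simp only [av, bv, ofW, of_apply, FreeMonoid.coeff_single_of_mul_ofList_cons, ih]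
      fin_cases d <;> simp [pow_succ, neg_ite]

theorem eq_sum_smul_av_sub_bv_pow_of_Delta_eq_zero {f : QA} (hf : Delta f = 0) {N : ℕ}
    (hN : ∀ w ∈ f.coeff.support, w.length < N) :
    f = ∑ n ∈ Finset.range N, f.coeff (.ofList (.replicate n 0)) • (av - bv) ^ n := by
  ext w
  obtain ⟨w, rfl⟩ := FreeMonoid.ofList.surjective w
  simp only [coeff_sum, Finsupp.finsetSum_apply, coeff_smul_apply, coeff_av_sub_bv_pow, smul_eq_mul,
    mul_ite, mul_zero, Finset.sum_ite_eq, Finset.mem_range]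
  split_ifs with hw
  · rw [coeff_eq_neg_one_pow_count_mul_of_Delta_eq_zero hf, mul_comm]
  · by_contra h
    exact hw (hN _ (Finsupp.mem_support_iff.mpr h))

/-- The kernel of `Δ : Q⟨a,b⟩ → Q⟨a,b⟩ ⊗ Q⟨a,b⟩` is `Q[a-b]`, the subalgebra of
polynomials in `a - b`. -/
theorem ker_Delta_eq_polynomials_in_a_sub_b :
    LinearMap.ker Delta = Subalgebra.toSubmodule (Algebra.adjoin ℚ ({av - bv} : Set QA)) := by
  rw [Algebra.adjoin_eq_span, ← Submonoid.powers_eq_closure]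
  apply le_antisymm
  · intro f hf
    have hN (w) (hw : w ∈ f.coeff.support) : w.length < f.coeff.support.sup FreeMonoid.length + 1 :=
      Nat.lt_succ_of_le (Finset.le_sup hw)
    rw [eq_sum_smul_av_sub_bv_pow_of_Delta_eq_zero hf hN]
    exact Submodule.sum_mem _ fun n _ => Submodule.smul_mem _ _ (Submodule.subset_span ⟨n, rfl⟩)
  · rw [Submodule.span_le]
    rintro _ ⟨n, rfl⟩
    exact Delta_av_sub_bv_pow n

end
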